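/- Let f ∈ W_s^μ with 1 ≤ s < ∞, μ > 2r − 1/s + 3/2, and suppose the coefficient perturbation satisfies ‖ξ‖_{ℓ_p} ≤ δ for some 1 ≤ p ≤ ∞ and 0 < δ < 1. Then choosing N ≍ δ^{−1/(μ − 1/p + 1/s)}, the truncation method satisfies ‖f^{(r)} − D_N^{(r)} f^δ‖_C ≤ c · δ^{(μ − 2r + 1/s − 3/2)/(μ − 1/p + 1/s)} with c independent of f (with ‖f‖_{s,μ} ≤ 1) and δ. -/

import Mathlib

open MeasureTheory Set ENNReal

/-- Orthonormal Legendre polynomial `φ_k(t) = √(k+1/2)·(2^k k!)⁻¹·dᵏ/dtᵏ[(t²-1)^k]`. -/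
noncomputable def phi (k : ℕ) : ℝ → ℝ := fun t =>
  Real.sqrt ((k : ℝ) + 1/2) * ((2:ℝ)^k * (Nat.factorial k : ℝ))⁻¹ *
    iteratedDeriv k (fun s => (s^2 - 1)^k) t

/-- Fourier–Legendre coefficient `⟨f, φ_k⟩`. -/
noncomputable def coef (f : ℝ → ℝ) (k : ℕ) : ℝ := ∫ t in (-1:ℝ)..1, f t * phi k t

/-- Summand of the weighted Wiener norm. -/
noncomputable def wSeq (s μ : ℝ) (f : ℝ → ℝ) (k : ℕ) : ℝ :=
  (max 1 (k:ℝ)) ^ (s * μ) * |coef f k| ^ s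

/-- Weighted Wiener norm `‖f‖_{s,μ}`. -/
noncomputable def wNorm (s μ : ℝ) (f : ℝ → ℝ) : ℝ := (∑' k, wSeq s μ f k) ^ (1/s)

/-- Truncation method `D_N^{(r)}` applied to a coefficient sequence `a`. -/
noncomputable def DN (a : ℕ → ℝ) (r N : ℕ) (t : ℝ) : ℝ :=
  ∑ k ∈ Finset.Icc r N, a k * iteratedDeriv r (phi k) t

/-- Lebesgue measure restricted to `[-1,1]`. -/
noncomputable def restr : Measure ℝ := volume.restrict (Set.Icc (-1) 1)

/-!
The error `f⁽ʳ⁾ - D_N⁽ʳ⁾ f^δ` splits into the propagated noise `∑_{k ≤ N} ξ_k φ_k⁽ʳ⁾` and the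
truncation tail `∑_{k > N} ⟨f, φ_k⟩ φ_k⁽ʳ⁾`. Both are controlled by the uniform bound
`|φ_k⁽ʳ⁾| ≤ (k + 1)^(2r + 1/2)` on `[-1, 1]`. It comes from the `r`-times differentiated Legendre
equation: evaluated at `±1` it gives a recursion for the endpoint values, and an energy function
shows that `(P_k⁽ʳ⁾)²` attains its maximum over `[-1, 1]` at an endpoint. Hölder's inequality
then bounds the noise by `(N + 1)^(2r + 3/2 - 1/p) δ` and, against the weighted Wiener norm, the
tail by `N^(-(μ - 2r - 3/2 + 1/s))`; the choice `N ≍ δ^(-1/(μ - 1/p + 1/s))` balances the two.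
-/

open Polynomial

/-- `rodrigues n = 2ⁿ n! Pₙ` (Rodrigues' formula), so `phi n = √(n + 1/2) (2ⁿ n!)⁻¹ rodrigues n`. -/
noncomputable def rodrigues (n : ℕ) : ℝ[X] := derivative^[n] ((X ^ 2 - 1) ^ n)

lemma sq_sub_one_mul_derivative_pow (n : ℕ) :
    (X ^ 2 - 1) * derivative ((X ^ 2 - 1) ^ n : ℝ[X]) = C (2 * n : ℝ) * X * (X ^ 2 - 1) ^ n := by
  cases n with
  | zero => simp
  | succ m =>
    rw [derivative_pow]
    simp only [derivative_sub, derivative_X_pow, derivative_one, Nat.add_sub_cancel, map_mul,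
      map_natCast, map_ofNat, Nat.cast_add, Nat.cast_one]
    ring

lemma iterate_derivative_pow_sq_sub_one_ode (n k : ℕ) :
    (X ^ 2 - 1) * derivative^[k + 2] ((X ^ 2 - 1) ^ n : ℝ[X])
      + C (2 * (k + 1) - 2 * n : ℝ) * X * derivative^[k + 1] ((X ^ 2 - 1) ^ n)
      + C ((k + 1) * (k - 2 * n) : ℝ) * derivative^[k] ((X ^ 2 - 1) ^ n) = 0 := by
  induction k with
  | zero =>
    have h := congrArg derivative (sq_sub_one_mul_derivative_pow n)
    simp only [derivative_mul, derivative_sub, derivative_X_pow, derivative_one, derivative_C,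
      derivative_X] at h
    simp only [Function.iterate_succ, Function.comp_apply, Function.iterate_zero, id_eq]
    simp only [map_mul, map_ofNat, map_natCast, map_sub, map_add, map_one] at h ⊢
    push_cast at h ⊢
    linear_combination h
  | succ k ih =>
    have h := congrArg derivative ih
    simp only [derivative_mul, derivative_add, derivative_sub, derivative_X_pow, derivative_one,
      derivative_C, derivative_X, derivative_zero, ← Function.iterate_succ_apply' derivative] at h
    simp only [map_mul, map_ofNat, map_natCast, map_sub, map_add, map_one] at h ⊢
    push_cast at h ⊢
    linear_combination h

lemma rodrigues_ode (n r : ℕ) :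
    (X ^ 2 - 1) * derivative^[2] (derivative^[r] (rodrigues n))
      + C (2 * r + 2 : ℝ) * X * derivative (derivative^[r] (rodrigues n))
      = C (n * (n + 1) - r * (r + 1) : ℝ) * derivative^[r] (rodrigues n) := by
  have h := iterate_derivative_pow_sq_sub_one_ode n (r + n)
  simp only [rodrigues, ← Function.iterate_add_apply, ← Function.iterate_succ_apply' derivative]
  rw [show 2 + (r + n) = r + n + 2 by ring]
  simp only [Nat.succ_eq_add_one, map_mul, map_ofNat, map_natCast, map_sub, map_add, map_one] at h ⊢
  push_cast at h ⊢
  linear_combination h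

lemma abs_eval_rodrigues_of_abs_eq_one {x : ℝ} (hx : |x| = 1) (n : ℕ) :
    |(rodrigues n).eval x| = 2 ^ n * n.factorial := by
  have hx2 : x ^ 2 = 1 := by rw [← sq_abs, hx, one_pow]
  have hfac : ((X ^ 2 - 1) ^ n : ℝ[X]).map (algebraMap ℝ ℝ) = (X - C x) ^ n * (X + C x) ^ n := by
    rw [Algebra.algebraMap_self, Polynomial.map_id, ← mul_pow, mul_comm, ← sq_sub_sq, ← C_pow,
      hx2, C_1]
  have h := aeval_iterate_derivative_self _ n x hfac
  rw [aeval_def, Algebra.algebraMap_self, eval₂_id] at h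
  rw [rodrigues, h, nsmul_eq_mul, eval_pow, eval_add, eval_X, eval_C, ← two_mul, abs_mul, abs_pow,
    abs_mul, hx, Nat.abs_cast, abs_two, mul_one, mul_comm]

lemma natDegree_pow_sq_sub_one_le (n : ℕ) : ((X ^ 2 - 1) ^ n : ℝ[X]).natDegree ≤ 2 * n := by
  have h : (X ^ 2 - 1 : ℝ[X]).natDegree = 2 := by rw [← C_1, natDegree_X_pow_sub_C]
  exact (natDegree_pow_le_of_le n h.le).trans_eq (mul_comm _ _)

lemma natDegree_iterate_derivative_rodrigues_le (n r : ℕ) :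
    (derivative^[r] (rodrigues n)).natDegree ≤ n - r := by
  rw [rodrigues, ← Function.iterate_add_apply]
  have := natDegree_pow_sq_sub_one_le n
  exact (natDegree_iterate_derivative _ _).trans (by omega)

lemma iterate_derivative_rodrigues_eq_zero {n r : ℕ} (h : n < r) :
    derivative^[r] (rodrigues n) = 0 := by
  rw [rodrigues, ← Function.iterate_add_apply]
  exact iterate_derivative_eq_zero ((natDegree_pow_sq_sub_one_le n).trans_lt (by omega))

lemma abs_eval_iterate_derivative_rodrigues_le_of_abs_eq_one {x : ℝ} (hx : |x| = 1) (n r : ℕ) :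
    |(derivative^[r] (rodrigues n)).eval x| ≤ 2 ^ n * n.factorial * ((n : ℝ) + 1) ^ (2 * r) := by
  induction r with
  | zero => simp [abs_eval_rodrigues_of_abs_eq_one hx]
  | succ r ih =>
    rcases lt_or_ge r n with hrn | hnr
    · set y := derivative^[r] (rodrigues n)
      set κ : ℝ := n * (n + 1) - r * (r + 1)
      have hκ : 0 ≤ κ ∧ κ ≤ ((n : ℝ) + 1) ^ 2 := by
        have : (r : ℝ) < n := by exact_mod_cast hrn
        constructor <;> nlinarith [(r.cast_nonneg : (0 : ℝ) ≤ r)]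
      have hx2 : x ^ 2 = 1 := by rw [← sq_abs, hx, one_pow]
      have hrec : (2 * r + 2) * |(derivative y).eval x| = κ * |y.eval x| := by
        have h := congrArg (eval x) (rodrigues_ode n r)
        simp only [eval_add, eval_mul, eval_sub, eval_pow, eval_X, eval_one, eval_C, hx2, sub_self,
          zero_mul, zero_add] at h
        rw [← abs_of_nonneg hκ.1, ← abs_mul, ← h, abs_mul, abs_mul, hx, mul_one,
          abs_of_nonneg (by positivity : (0 : ℝ) ≤ 2 * r + 2)]
      rw [Function.iterate_succ_apply']
      calc |(derivative y).eval x| ≤ (2 * r + 2) * |(derivative y).eval x| :=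
            le_mul_of_one_le_left (abs_nonneg _) (by linarith [(r.cast_nonneg : (0 : ℝ) ≤ r)])
        _ = κ * |y.eval x| := hrec
        _ ≤ ((n : ℝ) + 1) ^ 2 * (2 ^ n * n.factorial * ((n : ℝ) + 1) ^ (2 * r)) :=
            mul_le_mul hκ.2 ih (abs_nonneg _) (by positivity)
        _ = 2 ^ n * n.factorial * ((n : ℝ) + 1) ^ (2 * (r + 1)) := by ring
    · rw [iterate_derivative_rodrigues_eq_zero (by omega), eval_zero, abs_zero]
      positivity

lemma eval_le_max_of_derivative_eq_mul_X_mul_sq {H g : ℝ[X]} {a : ℝ} (ha : 0 ≤ a)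
    (hH : derivative H = C a * X * g ^ 2) {t : ℝ} (ht : t ∈ Icc (-1 : ℝ) 1) :
    H.eval t ≤ max (H.eval 1) (H.eval (-1)) := by
  have hderiv (x : ℝ) : deriv (fun x => H.eval x) x = a * x * g.eval x ^ 2 := by
    rw [Polynomial.deriv, hH]
    simp
  have hmono : MonotoneOn (fun x => H.eval x) (Icc 0 1) :=
    monotoneOn_of_deriv_nonneg (convex_Icc 0 1) H.continuousOn H.differentiable.differentiableOn
      fun x hx => by
        rw [interior_Icc] at hx
        have := hx.1.le
        rw [hderiv]
        positivity
  have hanti : AntitoneOn (fun x => H.eval x) (Icc (-1) 0) :=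
    antitoneOn_of_deriv_nonpos (convex_Icc (-1) 0) H.continuousOn H.differentiable.differentiableOn
      fun x hx => by
        rw [interior_Icc] at hx
        rw [hderiv]
        exact mul_nonpos_of_nonpos_of_nonneg (mul_nonpos_of_nonneg_of_nonpos ha hx.2.le)
          (sq_nonneg _)
  rcases le_total t 0 with h0 | h0
  · exact le_max_of_le_right (hanti ⟨le_rfl, by norm_num⟩ ⟨ht.1, h0⟩ ht.1)
  · exact le_max_of_le_left (hmono ⟨h0, ht.2⟩ ⟨zero_le_one, le_rfl⟩ ht.2)

lemma sq_eval_le_max_of_ode {y : ℝ[X]} {c κ : ℝ} (hc : 1 ≤ c) (hκ : 0 < κ)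
    (hode : (X ^ 2 - 1) * derivative^[2] y + C c * X * derivative y = C κ * y)
    {t : ℝ} (ht : t ∈ Icc (-1 : ℝ) 1) :
    (y.eval t) ^ 2 ≤ max ((y.eval 1) ^ 2) ((y.eval (-1)) ^ 2) := by
  -- `H` dominates `κ y²` on `[-1, 1]`, agrees with it at `±1`, and is largest at an endpoint.
  set H : ℝ[X] := C κ * y ^ 2 + (1 - X ^ 2) * derivative y ^ 2
  have hH : derivative H = C (2 * c - 2) * X * derivative y ^ 2 := by
    simp only [H, derivative_add, derivative_mul, derivative_sub, derivative_C, derivative_one,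
      derivative_sq, derivative_X, Function.iterate_succ, Function.comp_apply,
      Function.iterate_zero, id_eq] at hode ⊢
    simp only [map_sub, map_mul, map_ofNat] at hode ⊢
    linear_combination (-2 * derivative y) * hode
  have hlow : κ * y.eval t ^ 2 ≤ H.eval t := by
    have : 0 ≤ 1 - t ^ 2 := by nlinarith [ht.1, ht.2]
    simp only [H, eval_add, eval_mul, eval_C, eval_sub, eval_one, eval_pow, eval_X]
    nlinarith [sq_nonneg ((derivative y).eval t)]
  have hends : max (H.eval 1) (H.eval (-1)) = κ * max (y.eval 1 ^ 2) (y.eval (-1) ^ 2) := by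
    simp [H, mul_max_of_nonneg _ _ hκ.le]
  have hH_le := eval_le_max_of_derivative_eq_mul_X_mul_sq (by linarith) hH ht
  exact le_of_mul_le_mul_left (hends ▸ hlow.trans hH_le) hκ

lemma abs_eval_iterate_derivative_rodrigues_le (n r : ℕ) {t : ℝ} (ht : t ∈ Icc (-1 : ℝ) 1) :
    |(derivative^[r] (rodrigues n)).eval t| ≤ 2 ^ n * n.factorial * ((n : ℝ) + 1) ^ (2 * r) := by
  set y := derivative^[r] (rodrigues n)
  have hmax : y.eval t ^ 2 ≤ max (y.eval 1 ^ 2) (y.eval (-1) ^ 2) := by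
    rcases lt_or_ge r n with hrn | hnr
    · have : (r : ℝ) < n := by exact_mod_cast hrn
      exact sq_eval_le_max_of_ode (by linarith [r.cast_nonneg (α := ℝ)])
        (by nlinarith [r.cast_nonneg (α := ℝ)]) (rodrigues_ode n r) ht
    · have : y.natDegree = 0 :=
        Nat.le_zero.mp ((natDegree_iterate_derivative_rodrigues_le n r).trans (by omega))
      rw [eq_C_of_natDegree_eq_zero this]
      simp
  have hend {x : ℝ} (hx : |x| = 1) :
      y.eval x ^ 2 ≤ (2 ^ n * n.factorial * ((n : ℝ) + 1) ^ (2 * r)) ^ 2 :=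
    (sq_abs _).symm.trans_le <| pow_le_pow_left₀ (abs_nonneg _)
      (abs_eval_iterate_derivative_rodrigues_le_of_abs_eq_one hx n r) 2
  exact abs_le_of_sq_le_sq (hmax.trans (max_le (hend abs_one) (hend (by norm_num))))
    (by positivity)

lemma iteratedDeriv_eval (p : ℝ[X]) (m : ℕ) :
    iteratedDeriv m (fun x => p.eval x) = fun x => (derivative^[m] p).eval x := by
  induction m generalizing p with
  | zero => simp
  | succ m ih =>
    rw [iteratedDeriv_succ', funext fun x => p.deriv (x := x), ih, Function.iterate_succ_apply]

lemma iteratedDeriv_phi (k r : ℕ) (t : ℝ) :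
    iteratedDeriv r (phi k) t = √((k : ℝ) + 1 / 2) * ((2 : ℝ) ^ k * k.factorial)⁻¹ *
      (derivative^[r] (rodrigues k)).eval t := by
  have hphi : phi k = fun t =>
      (C (√((k : ℝ) + 1 / 2) * ((2 : ℝ) ^ k * k.factorial)⁻¹) * rodrigues k).eval t := by
    have hpow : (fun s : ℝ => (s ^ 2 - 1) ^ k) = fun s => ((X ^ 2 - 1) ^ k : ℝ[X]).eval s := by
      simp
    ext t
    rw [phi, hpow, iteratedDeriv_eval, eval_mul, eval_C, rodrigues]
  rw [hphi, iteratedDeriv_eval, iterate_derivative_C_mul]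
  simp only [eval_mul, eval_C]

lemma iteratedDeriv_phi_eq_zero {k r : ℕ} (h : k < r) (t : ℝ) : iteratedDeriv r (phi k) t = 0 := by
  rw [iteratedDeriv_phi, iterate_derivative_rodrigues_eq_zero h, eval_zero, mul_zero]

lemma abs_iteratedDeriv_phi_le (k r : ℕ) {t : ℝ} (ht : t ∈ Icc (-1 : ℝ) 1) :
    |iteratedDeriv r (phi k) t| ≤ ((k : ℝ) + 1) ^ (2 * r + 1 / 2 : ℝ) := by
  have hk : (0 : ℝ) < k + 1 := by positivity
  rw [iteratedDeriv_phi, abs_mul, abs_of_nonneg (by positivity)]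
  calc √((k : ℝ) + 1 / 2) * ((2 : ℝ) ^ k * k.factorial)⁻¹ * |(derivative^[r] (rodrigues k)).eval t|
      ≤ √((k : ℝ) + 1 / 2) * ((2 : ℝ) ^ k * k.factorial)⁻¹ *
          (2 ^ k * k.factorial * ((k : ℝ) + 1) ^ (2 * r)) := by
        gcongr
        exact abs_eval_iterate_derivative_rodrigues_le k r ht
    _ = √((k : ℝ) + 1 / 2) * ((k : ℝ) + 1) ^ (2 * r) := by field_simp
    _ ≤ ((k : ℝ) + 1) ^ (1 / 2 : ℝ) * ((k : ℝ) + 1) ^ (2 * r : ℝ) := by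
        rw [← Real.sqrt_eq_rpow, ← Real.rpow_natCast]
        push_cast
        gcongr
        linarith
    _ = ((k : ℝ) + 1) ^ (2 * r + 1 / 2 : ℝ) := by rw [← Real.rpow_add hk, add_comm (1 / 2 : ℝ)]

lemma one_div_toReal_le_one {p : ℝ≥0∞} (hp : 1 ≤ p) : 1 / p.toReal ≤ 1 := by
  rcases eq_or_ne p ⊤ with rfl | hp_top
  · simp
  · exact div_le_one_of_le₀ (by simpa using ENNReal.toReal_mono hp_top hp) ENNReal.toReal_nonneg

lemma sum_abs_le_card_rpow_mul_of_eLpNorm_le {α : Type*} [MeasurableSpace α]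
    [DiscreteMeasurableSpace α] {ξ : α → ℝ} {p : ℝ≥0∞} (hp : 1 ≤ p) {δ : ℝ} (hδ : 0 ≤ δ)
    (h : eLpNorm ξ p Measure.count ≤ ENNReal.ofReal δ) (F : Finset α) :
    ∑ k ∈ F, |ξ k| ≤ (F.card : ℝ) ^ (1 - 1 / p.toReal) * δ := by
  set ν : Measure α := Measure.count.restrict F
  have hholder := eLpNorm_le_eLpNorm_mul_rpow_measure_univ (μ := ν) hp
    (Measurable.of_discrete (f := ξ)).aestronglyMeasurable
  have hL1 : eLpNorm ξ 1 ν = ENNReal.ofReal (∑ k ∈ F, |ξ k|) := by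
    rw [eLpNorm_one_eq_lintegral_enorm, lintegral_finset, ENNReal.ofReal_sum_of_nonneg
      (fun k _ => abs_nonneg _)]
    simp [Real.enorm_eq_ofReal_abs]
  have hν : ν univ = F.card := by simp [ν]
  have hLp : eLpNorm ξ p ν ≤ ENNReal.ofReal δ :=
    (eLpNorm_mono_measure ξ Measure.restrict_le_self).trans h
  rw [hL1, hν, ENNReal.toReal_one, div_one] at hholder
  rw [← ENNReal.ofReal_le_ofReal_iff (by positivity), mul_comm, ENNReal.ofReal_mul hδ,
    ← ENNReal.ofReal_rpow_of_nonneg (by positivity) (by linarith [one_div_toReal_le_one hp]),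
    ENNReal.ofReal_natCast]
  exact hholder.trans (by gcongr)

lemma tsum_rpow_neg_nat_add_le {γ : ℝ} (hγ : 1 < γ) {N : ℕ} (hN : 1 ≤ N) :
    Summable (fun j : ℕ => ((j + (N + 1) : ℕ) : ℝ) ^ (-γ)) ∧
      ∑' j : ℕ, ((j + (N + 1) : ℕ) : ℝ) ^ (-γ) ≤ (N : ℝ) ^ (1 - γ) / (γ - 1) := by
  have hN0 : (0 : ℝ) < N := by exact_mod_cast hN
  refine ⟨(summable_nat_add_iff (N + 1)).mpr (Real.summable_nat_rpow.mpr (by linarith)), ?_⟩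
  have anti : AntitoneOn (fun x : ℝ => x ^ (-γ)) (Ici (N : ℝ)) := fun x hx y _ hxy =>
    Real.rpow_le_rpow_of_nonpos (hN0.trans_le hx) hxy (by linarith)
  calc ∑' j : ℕ, ((j + (N + 1) : ℕ) : ℝ) ^ (-γ) ≤ ∫ x in Ioi (N : ℝ), x ^ (-γ) :=
        anti.tsum_comp_add_le_integral N (integrableOn_Ioi_rpow_of_lt (by linarith) hN0)
          fun t ht => Real.rpow_nonneg (hN0.trans ht).le _
    _ = (N : ℝ) ^ (1 - γ) / (γ - 1) := by
        rw [integral_Ioi_rpow_of_lt (by linarith) hN0, neg_add_eq_sub, ← neg_sub γ 1, div_neg,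
          neg_div, neg_neg]

lemma tsum_mul_rpow_neg_nat_add_le_of_tsum_le_one {β : ℝ} (hβ : 0 ≤ β) {F : ℕ → ℝ}
    (hF : ∀ j, 0 ≤ F j) (hsum : Summable F) (hle : ∑' j, F j ≤ 1) {N : ℕ} (hN : 1 ≤ N) :
    Summable (fun j => F j * ((j + (N + 1) : ℕ) : ℝ) ^ (-β)) ∧
      ∑' j, F j * ((j + (N + 1) : ℕ) : ℝ) ^ (-β) ≤ (N : ℝ) ^ (-β) := by
  have hN0 : (0 : ℝ) < N := by exact_mod_cast hN
  have hbound (j : ℕ) : F j * ((j + (N + 1) : ℕ) : ℝ) ^ (-β) ≤ F j * (N : ℝ) ^ (-β) := by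
    refine mul_le_mul_of_nonneg_left (Real.rpow_le_rpow_of_nonpos hN0 ?_ (by linarith)) (hF j)
    push_cast
    linarith [j.cast_nonneg (α := ℝ)]
  have hsum' : Summable (fun j => F j * ((j + (N + 1) : ℕ) : ℝ) ^ (-β)) :=
    (hsum.mul_right _).of_nonneg_of_le (fun j => mul_nonneg (hF j) (by positivity)) hbound
  refine ⟨hsum', ?_⟩
  calc ∑' j, F j * ((j + (N + 1) : ℕ) : ℝ) ^ (-β) ≤ ∑' j, F j * (N : ℝ) ^ (-β) :=
        hsum'.tsum_le_tsum hbound (hsum.mul_right _)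
    _ = (∑' j, F j) * (N : ℝ) ^ (-β) := tsum_mul_right
    _ ≤ (N : ℝ) ^ (-β) := mul_le_of_le_one_left (by positivity) hle

lemma one_lt_mul_conjExponent {s β : ℝ} (hs : 1 < s) (hβ : 1 - 1 / s < β) :
    1 < β * s.conjExponent := by
  have hss' : s.HolderConjugate s.conjExponent := .conjExponent hs
  have := mul_lt_mul_of_pos_right hβ hss'.symm.pos
  rwa [one_div, hss'.one_sub_inv, inv_mul_cancel₀ hss'.symm.ne_zero] at this

lemma tsum_mul_rpow_neg_nat_add_le_of_tsum_rpow_le_one {s β : ℝ} (hs : 1 < s)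
    (hβ : 1 - 1 / s < β) {F : ℕ → ℝ} (hF : ∀ j, 0 ≤ F j) (hsum : Summable (fun j => F j ^ s))
    (hle : ∑' j, F j ^ s ≤ 1) {N : ℕ} (hN : 1 ≤ N) :
    Summable (fun j => F j * ((j + (N + 1) : ℕ) : ℝ) ^ (-β)) ∧
      ∑' j, F j * ((j + (N + 1) : ℕ) : ℝ) ^ (-β) ≤
        ((β * s.conjExponent - 1)⁻¹) ^ (1 / s.conjExponent) * (N : ℝ) ^ (-(β - 1 + 1 / s)) := by
  set s' := s.conjExponent
  have hss' : s.HolderConjugate s' := .conjExponent hs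
  have hs' : 0 < s' := hss'.symm.pos
  set γ := β * s'
  have hinv : 1 / s' = 1 - 1 / s := by rw [one_div, one_div, hss'.one_sub_inv]
  have hγ1 : 0 < γ - 1 := by linarith [one_lt_mul_conjExponent hs hβ]
  have hN0 : (0 : ℝ) < N := by exact_mod_cast hN
  set G : ℕ → ℝ := fun j => ((j + (N + 1) : ℕ) : ℝ) ^ (-β)
  have hGs' (j : ℕ) : G j ^ s' = ((j + (N + 1) : ℕ) : ℝ) ^ (-γ) := by
    rw [← Real.rpow_mul (by positivity), neg_mul]
  obtain ⟨hGsum, hGle⟩ := tsum_rpow_neg_nat_add_le (γ := γ) (one_lt_mul_conjExponent hs hβ) hN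
  simp only [← hGs'] at hGsum hGle
  obtain ⟨hFG, hHolder⟩ := Real.summable_and_inner_le_Lp_mul_Lq_tsum_of_nonneg hss' hF
    (fun j => by positivity) hsum hGsum
  refine ⟨hFG, hHolder.trans ?_⟩
  calc (∑' j, F j ^ s) ^ (1 / s) * (∑' j, G j ^ s') ^ (1 / s')
      ≤ 1 * ((N : ℝ) ^ (1 - γ) / (γ - 1)) ^ (1 / s') := by
        have hFs : 0 ≤ ∑' j, F j ^ s := tsum_nonneg fun j => Real.rpow_nonneg (hF j) s
        have hGs : 0 ≤ ∑' j, G j ^ s' := tsum_nonneg fun j => by positivity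
        gcongr
        exact Real.rpow_le_one hFs hle (by positivity)
    _ = ((γ - 1)⁻¹) ^ (1 / s') * (N : ℝ) ^ (-(β - 1 + 1 / s)) := by
        rw [one_mul, div_eq_inv_mul, Real.mul_rpow (by positivity) (by positivity),
          ← Real.rpow_mul hN0.le]
        congr 2
        rw [sub_mul, one_mul, mul_one_div, hinv, mul_div_cancel_right₀ β hs'.ne']
        ring

lemma tsum_mul_rpow_neg_nat_add_le {s β : ℝ} (hs : 1 ≤ s) (hβ : 1 - 1 / s < β) :
    ∃ K > 0, ∀ F : ℕ → ℝ, (∀ j, 0 ≤ F j) → Summable (fun j => F j ^ s) →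
      ∑' j, F j ^ s ≤ 1 → ∀ N : ℕ, 1 ≤ N →
        Summable (fun j => F j * ((j + (N + 1) : ℕ) : ℝ) ^ (-β)) ∧
          ∑' j, F j * ((j + (N + 1) : ℕ) : ℝ) ^ (-β) ≤ K * (N : ℝ) ^ (-(β - 1 + 1 / s)) := by
  rcases hs.eq_or_lt with rfl | hs
  · refine ⟨1, one_pos, fun F hF hsum hle N hN => ?_⟩
    simp only [Real.rpow_one, div_one, sub_add_cancel, one_mul] at hsum hle ⊢
    exact tsum_mul_rpow_neg_nat_add_le_of_tsum_le_one (by linarith) hF hsum hle hN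
  · have hγ1 : 0 < β * s.conjExponent - 1 := by linarith [one_lt_mul_conjExponent hs hβ]
    exact ⟨_, by positivity, fun F hF hsum hle N hN =>
      tsum_mul_rpow_neg_nat_add_le_of_tsum_rpow_le_one hs hβ hF hsum hle hN⟩

lemma tsum_wSeq_le_one {s μ : ℝ} (hs : 0 < s) {f : ℝ → ℝ} (hf : wNorm s μ f ≤ 1) :
    ∑' k, wSeq s μ f k ≤ 1 := by
  by_contra! h
  exact (Real.one_lt_rpow h (by positivity)).not_ge hf

lemma wSeq_nonneg (s μ : ℝ) (f : ℝ → ℝ) (k : ℕ) : 0 ≤ wSeq s μ f k := by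
  have : (0 : ℝ) < max 1 (k : ℝ) := lt_max_of_lt_left one_pos
  unfold wSeq
  positivity

lemma wSeq_of_one_le (s μ : ℝ) (f : ℝ → ℝ) {k : ℕ} (hk : 1 ≤ k) :
    wSeq s μ f k = ((k : ℝ) ^ μ * |coef f k|) ^ s := by
  have hk' : (1 : ℝ) ≤ k := by exact_mod_cast hk
  rw [wSeq, max_eq_right hk', Real.mul_rpow (by positivity) (abs_nonneg _),
    ← Real.rpow_mul (by positivity), mul_comm μ]

lemma abs_iteratedDeriv_phi_le_two_mul (r : ℕ) {k : ℕ} (hk : 1 ≤ k) {t : ℝ}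
    (ht : t ∈ Icc (-1 : ℝ) 1) :
    |iteratedDeriv r (phi k) t| ≤ 2 ^ (2 * r + 1 / 2 : ℝ) * (k : ℝ) ^ (2 * r + 1 / 2 : ℝ) := by
  have hk' : (1 : ℝ) ≤ k := by exact_mod_cast hk
  rw [← Real.mul_rpow zero_le_two (by positivity)]
  exact (abs_iteratedDeriv_phi_le k r ht).trans (by gcongr; linarith)

lemma abs_tsum_legendre_tail_le (r : ℕ) {s μ : ℝ} (hs : 1 ≤ s) (hμ : 2 * r - 1 / s + 3 / 2 < μ) :
    ∃ K > 0, ∀ f : ℝ → ℝ, Summable (wSeq s μ f) → wNorm s μ f ≤ 1 →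
      ∀ N : ℕ, 1 ≤ N → ∀ t ∈ Icc (-1 : ℝ) 1,
        Summable (fun j => coef f (j + (N + 1)) * iteratedDeriv r (phi (j + (N + 1))) t) ∧
          |∑' j, coef f (j + (N + 1)) * iteratedDeriv r (phi (j + (N + 1))) t| ≤
            K * (N : ℝ) ^ (-(μ - (2 * r + 1 / 2) - 1 + 1 / s)) := by
  set E : ℝ := 2 * r + 1 / 2
  obtain ⟨K, hK, htail⟩ := tsum_mul_rpow_neg_nat_add_le (β := μ - E) hs (by simp only [E]; linarith)
  refine ⟨2 ^ E * K, by positivity, fun f hsum hf N hN t ht => ?_⟩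
  set F : ℕ → ℝ := fun j => ((j + (N + 1) : ℕ) : ℝ) ^ μ * |coef f (j + (N + 1))|
  have hFs : (fun j => F j ^ s) = fun j => wSeq s μ f (j + (N + 1)) :=
    funext fun j => (wSeq_of_one_le s μ f (by omega)).symm
  obtain ⟨hsumFG, hleFG⟩ := htail F (fun j => by positivity)
    (hFs ▸ (summable_nat_add_iff (N + 1)).mpr hsum)
    (hFs ▸ (tsum_comp_le_tsum_of_inj hsum (wSeq_nonneg s μ f) (add_left_injective (N + 1))).trans
      (tsum_wSeq_le_one (by linarith) hf))
    N hN
  have hterm (j : ℕ) : ‖coef f (j + (N + 1)) * iteratedDeriv r (phi (j + (N + 1))) t‖ ≤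
      2 ^ E * (F j * ((j + (N + 1) : ℕ) : ℝ) ^ (-(μ - E))) := by
    have hk : (0 : ℝ) < (j + (N + 1) : ℕ) := by positivity
    rw [Real.norm_eq_abs, abs_mul]
    calc |coef f (j + (N + 1))| * |iteratedDeriv r (phi (j + (N + 1))) t|
        ≤ |coef f (j + (N + 1))| * (2 ^ E * ((j + (N + 1) : ℕ) : ℝ) ^ E) := by
          gcongr
          exact abs_iteratedDeriv_phi_le_two_mul r (by omega) ht
      _ = 2 ^ E * (F j * ((j + (N + 1) : ℕ) : ℝ) ^ (-(μ - E))) := by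
          rw [mul_assoc, mul_comm (((j + (N + 1) : ℕ) : ℝ) ^ μ), mul_assoc, ← Real.rpow_add hk]
          ring_nf
  have hsum' := (hsumFG.mul_left (2 ^ E)).of_norm_bounded hterm
  refine ⟨hsum', ?_⟩
  calc |∑' j, coef f (j + (N + 1)) * iteratedDeriv r (phi (j + (N + 1))) t|
      ≤ ∑' j, 2 ^ E * (F j * ((j + (N + 1) : ℕ) : ℝ) ^ (-(μ - E))) :=
        tsum_of_norm_bounded (hsumFG.mul_left (2 ^ E)).hasSum hterm
    _ = 2 ^ E * ∑' j, F j * ((j + (N + 1) : ℕ) : ℝ) ^ (-(μ - E)) := tsum_mul_left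
    _ ≤ 2 ^ E * K * (N : ℝ) ^ (-(μ - E - 1 + 1 / s)) := by
        rw [mul_assoc]
        gcongr

lemma DN_eq_sum_range (a : ℕ → ℝ) (r N : ℕ) (t : ℝ) :
    DN a r N t = ∑ k ∈ Finset.range (N + 1), a k * iteratedDeriv r (phi k) t := by
  refine Finset.sum_subset (fun k hk => ?_) (fun k hkN hk => ?_)
  · simp only [Finset.mem_Icc, Finset.mem_range] at hk ⊢
    omega
  · simp only [Finset.mem_range, Finset.mem_Icc, not_and, not_le] at hkN hk
    rw [iteratedDeriv_phi_eq_zero (by omega), mul_zero]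

lemma abs_DN_le {ξ : ℕ → ℝ} {p : ℝ≥0∞} (hp : 1 ≤ p) {δ : ℝ} (hδ : 0 ≤ δ)
    (hξ : eLpNorm ξ p Measure.count ≤ ENNReal.ofReal δ) (r N : ℕ) {t : ℝ}
    (ht : t ∈ Icc (-1 : ℝ) 1) :
    |DN ξ r N t| ≤ ((N : ℝ) + 1) ^ (2 * r + 1 / 2 + (1 - 1 / p.toReal)) * δ := by
  have hN : (0 : ℝ) < N + 1 := by positivity
  have hψ {k : ℕ} (hk : k ∈ Finset.range (N + 1)) :
      |iteratedDeriv r (phi k) t| ≤ ((N : ℝ) + 1) ^ (2 * r + 1 / 2 : ℝ) := by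
    have : (k : ℝ) ≤ N := by exact_mod_cast Nat.lt_succ_iff.mp (Finset.mem_range.mp hk)
    exact (abs_iteratedDeriv_phi_le k r ht).trans (by gcongr)
  rw [DN_eq_sum_range]
  calc |∑ k ∈ Finset.range (N + 1), ξ k * iteratedDeriv r (phi k) t|
      ≤ ∑ k ∈ Finset.range (N + 1), |ξ k| * ((N : ℝ) + 1) ^ (2 * r + 1 / 2 : ℝ) :=
        (Finset.abs_sum_le_sum_abs _ _).trans <| Finset.sum_le_sum fun k hk => by
          rw [abs_mul]
          exact mul_le_mul_of_nonneg_left (hψ hk) (abs_nonneg _)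
    _ = ((N : ℝ) + 1) ^ (2 * r + 1 / 2 : ℝ) * ∑ k ∈ Finset.range (N + 1), |ξ k| := by
        rw [← Finset.sum_mul, mul_comm]
    _ ≤ ((N : ℝ) + 1) ^ (2 * r + 1 / 2 : ℝ) * (((N : ℝ) + 1) ^ (1 - 1 / p.toReal) * δ) := by
        gcongr
        simpa using sum_abs_le_card_rpow_mul_of_eLpNorm_le hp hδ hξ (Finset.range (N + 1))
    _ = ((N : ℝ) + 1) ^ (2 * r + 1 / 2 + (1 - 1 / p.toReal)) * δ := by
        rw [← mul_assoc, ← Real.rpow_add hN]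

lemma iteratedDeriv_sub_DN_eq {f fδ : ℝ → ℝ} {r N : ℕ} {t : ℝ}
    (hsum : Summable (fun j => coef f (j + (N + 1)) * iteratedDeriv r (phi (j + (N + 1))) t))
    (hrep : iteratedDeriv r f t = ∑' k, coef f k * iteratedDeriv r (phi k) t) :
    iteratedDeriv r f t - DN (coef fδ) r N t =
      DN (fun k => coef f k - coef fδ k) r N t +
        ∑' j, coef f (j + (N + 1)) * iteratedDeriv r (phi (j + (N + 1))) t := by
  have hsum' : Summable (fun k => coef f k * iteratedDeriv r (phi k) t) :=
    (summable_nat_add_iff (f := fun k => coef f k * iteratedDeriv r (phi k) t) (N + 1)).mp hsum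
  rw [hrep, ← hsum'.sum_add_tsum_nat_add (N + 1), DN_eq_sum_range, DN_eq_sum_range]
  simp only [sub_mul, Finset.sum_sub_distrib]
  ring

lemma rpow_mul_add_mul_rpow_neg_le {C₁ C₂ K δ q θ : ℝ} {N : ℕ} (hC₁ : 0 < C₁) (hC₂ : 0 ≤ C₂)
    (hK : 0 ≤ K) (hδ : 0 < δ) (hq : 0 ≤ q) (hθ : 0 < θ) (hN : 1 ≤ N)
    (hN₁ : C₁ * δ ^ (-(1 / (q + θ))) ≤ N) (hN₂ : N ≤ C₂ * δ ^ (-(1 / (q + θ)))) :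
    ((N : ℝ) + 1) ^ q * δ + K * (N : ℝ) ^ (-θ) ≤
      ((2 * C₂) ^ q + K * C₁ ^ (-θ)) * δ ^ (θ / (q + θ)) := by
  -- Both terms are multiples of `x ^ (-θ) = δ ^ (θ / (q + θ))`.
  set x := δ ^ (-(1 / (q + θ)))
  have hd : 0 < q + θ := by linarith
  have hx : 0 < x := Real.rpow_pos_of_pos hδ _
  have hN' : (1 : ℝ) ≤ N := by exact_mod_cast hN
  have hxq : x ^ q * δ = δ ^ (θ / (q + θ)) := by
    rw [← Real.rpow_mul hδ.le, ← Real.rpow_add_one hδ.ne']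
    congr 1
    field_simp
    ring
  have hxθ : x ^ (-θ) = δ ^ (θ / (q + θ)) := by
    rw [← Real.rpow_mul hδ.le]
    congr 1
    ring
  calc ((N : ℝ) + 1) ^ q * δ + K * (N : ℝ) ^ (-θ)
      ≤ (2 * C₂ * x) ^ q * δ + K * (C₁ * x) ^ (-θ) := by
        refine add_le_add (mul_le_mul_of_nonneg_right ?_ hδ.le)
          (mul_le_mul_of_nonneg_left ?_ hK)
        · exact Real.rpow_le_rpow (by positivity) (by linarith) hq
        · exact Real.rpow_le_rpow_of_nonpos (by positivity) hN₁ (by linarith)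
    _ = ((2 * C₂) ^ q + K * C₁ ^ (-θ)) * δ ^ (θ / (q + θ)) := by
        rw [Real.mul_rpow (by positivity) hx.le, Real.mul_rpow hC₁.le hx.le, mul_assoc, hxq,
          hxθ]
        ring

theorem stmt_5_general (r : ℕ) (s μ : ℝ) (hs : 1 ≤ s)
    (hμ : μ > 2 * r - 1 / s + 3 / 2) (p : ℝ≥0∞) (hp : 1 ≤ p)
    (C₁ C₂ : ℝ) (hC₁ : 0 < C₁) (hC₁₂ : C₁ ≤ C₂) :
    ∃ c : ℝ, 0 < c ∧ ∀ (δ : ℝ), 0 < δ → δ < 1 → ∀ f fδ : ℝ → ℝ,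
      MemLp f 2 restr → Summable (wSeq s μ f) → wNorm s μ f ≤ 1 →
      (∀ t ∈ Set.Icc (-1:ℝ) 1,
        iteratedDeriv r f t = ∑' k : ℕ, coef f k * iteratedDeriv r (phi k) t) →
      eLpNorm (fun k : ℕ => coef f k - coef fδ k) p (Measure.count) ≤ ENNReal.ofReal δ →
      ∀ N : ℕ,
        C₁ * δ ^ (-(1 / (μ - 1 / p.toReal + 1 / s))) ≤ (N : ℝ) →
        (N : ℝ) ≤ C₂ * δ ^ (-(1 / (μ - 1 / p.toReal + 1 / s))) →
        ∀ t ∈ Set.Icc (-1:ℝ) 1,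
          |iteratedDeriv r f t - DN (coef fδ) r N t| ≤
            c * δ ^ ((μ - 2 * r + 1 / s - 3 / 2) / (μ - 1 / p.toReal + 1 / s)) := by
  obtain ⟨K, hK, htail⟩ := abs_tsum_legendre_tail_le r hs hμ
  set q : ℝ := 2 * r + 1 / 2 + (1 - 1 / p.toReal)
  set θ : ℝ := μ - (2 * r + 1 / 2) - 1 + 1 / s
  have hq : 0 ≤ q := by simp only [q]; linarith [one_div_toReal_le_one hp, r.cast_nonneg (α := ℝ)]
  have hθ : 0 < θ := by simp only [θ]; linarith
  have hC₂ : 0 < C₂ := hC₁.trans_le hC₁₂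
  have hd : μ - 1 / p.toReal + 1 / s = q + θ := by ring
  refine ⟨(2 * C₂) ^ q + K * C₁ ^ (-θ), by positivity, ?_⟩
  intro δ hδ _ f fδ _ hsum hf hrep hξ N hN₁ hN₂ t ht
  rw [hd] at hN₁ hN₂
  rw [show μ - 2 * r + 1 / s - 3 / 2 = θ by ring, hd]
  have hN : 1 ≤ N := by exact_mod_cast (mul_pos hC₁ (Real.rpow_pos_of_pos hδ _)).trans_le hN₁
  obtain ⟨hsum_tail, htail_le⟩ := htail f hsum hf N hN t ht
  rw [iteratedDeriv_sub_DN_eq hsum_tail (hrep t ht)]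
  calc _ ≤ _ := abs_add_le _ _
    _ ≤ ((N : ℝ) + 1) ^ q * δ + K * (N : ℝ) ^ (-θ) :=
        add_le_add (abs_DN_le hp hδ.le hξ r N ht) htail_le
    _ ≤ _ := rpow_mul_add_mul_rpow_neg_le hC₁ hC₂.le hK.le hδ hq hθ hN hN₁ hN₂

/-- Theorem 2: for `f` in the unit ball of `W_s^μ`, `μ > 2r - 1/s + 3/2`,
`‖ξ‖_{ℓ_p} ≤ δ` and `N ≍ δ^{-1/(μ-1/p+1/s)}`:
`‖f^{(r)} - D_N^{(r)}f^δ‖_C ≤ c δ^{(μ-2r+1/s-3/2)/(μ-1/p+1/s)}`. -/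
theorem stmt_5 (r : ℕ) (hr : 1 ≤ r) (s μ : ℝ) (hs : 1 ≤ s)
    (hμ : μ > 2 * r - 1 / s + 3 / 2) (p : ℝ≥0∞) (hp : 1 ≤ p)
    (C₁ C₂ : ℝ) (hC₁ : 0 < C₁) (hC₁₂ : C₁ ≤ C₂) :
    ∃ c : ℝ, 0 < c ∧ ∀ (δ : ℝ), 0 < δ → δ < 1 → ∀ f fδ : ℝ → ℝ,
      MemLp f 2 restr → Summable (wSeq s μ f) → wNorm s μ f ≤ 1 →
      (∀ t ∈ Set.Icc (-1:ℝ) 1,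
        iteratedDeriv r f t = ∑' k : ℕ, coef f k * iteratedDeriv r (phi k) t) →
      eLpNorm (fun k : ℕ => coef f k - coef fδ k) p (Measure.count) ≤ ENNReal.ofReal δ →
      ∀ N : ℕ,
        C₁ * δ ^ (-(1 / (μ - 1 / p.toReal + 1 / s))) ≤ (N : ℝ) →
        (N : ℝ) ≤ C₂ * δ ^ (-(1 / (μ - 1 / p.toReal + 1 / s))) →
        ∀ t ∈ Set.Icc (-1:ℝ) 1,
          |iteratedDeriv r f t - DN (coef fδ) r N t| ≤
            c * δ ^ ((μ - 2 * r + 1 / s - 3 / 2) / (μ - 1 / p.toReal + 1 / s)) :=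
  stmt_5_general r s μ hs hμ p hp C₁ C₂ hC₁ hC₁₂
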